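/- Let H be a finite-dimensional Hilbert space, ρ a density operator on H, and Π an orthogonal projection on H with Tr(Πρ) = δ < 1. Let ρ'' = (I−Π)ρ(I−Π) and ρ' = ρ''/Tr(ρ''). Then the fidelity F(ρ, ρ') ≥ 1 − δ. -/

import Mathlib

open Matrix ComplexOrder

variable {n : Type*} [Fintype n] [DecidableEq n]

/-- The square root `Matrix.PosSemidef.sqrt` as Mathlib (Dec 2024) defined it. -/
noncomputable def oldPosSemidefSqrt {A : Matrix n n ℂ} (hA : A.PosSemidef) : Matrix n n ℂ :=
  hA.1.eigenvectorUnitary.1 * diagonal ((↑) ∘ Real.sqrt ∘ hA.1.eigenvalues) *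
    (star hA.1.eigenvectorUnitary : Matrix n n ℂ)

/-- The trace norm `‖M‖₁ = Tr √(Mᴴ M)` of a matrix. -/
noncomputable def traceNorm (M : Matrix n n ℂ) : ℝ :=
  ((oldPosSemidefSqrt (Matrix.posSemidef_conjTranspose_mul_self M)).trace).re

/-- Positive semidefinite square root (junk value `0` off the PSD matrices). -/
noncomputable def msqrt (A : Matrix n n ℂ) : Matrix n n ℂ :=
  @dite _ A.PosSemidef (Classical.propDecidable _) (fun h => oldPosSemidefSqrt h) (fun _ => 0)

/-- Fidelity `F(ρ,σ) = ‖√ρ √σ‖₁²`. -/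
noncomputable def fidelity (ρ σ : Matrix n n ℂ) : ℝ :=
  (traceNorm (msqrt ρ * msqrt σ)) ^ 2

/-- A density operator: positive semidefinite with unit trace. -/
def IsDensity (ρ : Matrix n n ℂ) : Prop := ρ.PosSemidef ∧ ρ.trace = 1

/-- The Löwner partial order `A ⪯ B`. -/
def Loewner (A B : Matrix n n ℂ) : Prop := (B - A).PosSemidef

/-- `supp ρ ⊆ supp σ`, expressed for PSD matrices as `ker σ ⊆ ker ρ`. -/
def SuppSubset (ρ σ : Matrix n n ℂ) : Prop := ∀ v, σ *ᵥ v = 0 → ρ *ᵥ v = 0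

/-- Observational divergence `D(ρ‖σ)`. -/
noncomputable def obsDiv (ρ σ : Matrix n n ℂ) : ℝ :=
  sSup { x | ∃ M : Matrix n n ℂ, M.PosSemidef ∧ (1 - M).PosSemidef ∧
    (M * σ).trace ≠ 0 ∧
    x = ((M * ρ).trace).re * Real.logb 2 (((M * ρ).trace).re / ((M * σ).trace).re) }

set_option linter.unusedSectionVars false
open scoped MatrixOrder in
lemma oldPosSemidefSqrt_eq_cfc {A : Matrix n n ℂ} (hA : A.PosSemidef) :
    oldPosSemidefSqrt hA = CFC.sqrt A := by
  rw [CFC.sqrt_eq_cfc, cfc_nnreal_eq_real _ A (Matrix.nonneg_iff_posSemidef.mpr hA), hA.1.cfc_eq]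
  unfold oldPosSemidefSqrt IsHermitian.cfc
  rw [Unitary.conjStarAlgAut_apply]
  congr 3
  funext i
  simp [Real.coe_toNNReal', max_eq_left (hA.eigenvalues_nonneg i)]

open scoped MatrixOrder in
lemma Matrix.PosSemidef.posSemidef_sqrt {A : Matrix n n ℂ} (hA : A.PosSemidef) :
    (oldPosSemidefSqrt hA).PosSemidef := by
  rw [oldPosSemidefSqrt_eq_cfc]
  exact Matrix.nonneg_iff_posSemidef.mp (CFC.sqrt_nonneg A)

open scoped MatrixOrder in
lemma Matrix.PosSemidef.sqrt_mul_self {A : Matrix n n ℂ} (hA : A.PosSemidef) :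
    oldPosSemidefSqrt hA * oldPosSemidefSqrt hA = A := by
  rw [oldPosSemidefSqrt_eq_cfc]
  exact CFC.sqrt_mul_sqrt_self A (Matrix.nonneg_iff_posSemidef.mpr hA)

lemma Matrix.PosSemidef.sq_sqrt {A : Matrix n n ℂ} (hA : A.PosSemidef) :
    (oldPosSemidefSqrt hA) ^ 2 = A := by
  rw [sq, hA.sqrt_mul_self]

open scoped MatrixOrder in
lemma Matrix.PosSemidef.eq_sqrt_of_sq_eq {B : Matrix n n ℂ} (hB : B.PosSemidef)
    {A : Matrix n n ℂ} (hA : A.PosSemidef) (h : B ^ 2 = A) : B = oldPosSemidefSqrt hA := by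
  rw [oldPosSemidefSqrt_eq_cfc]
  exact (CFC.sqrt_unique (by rw [← sq, h]) (Matrix.nonneg_iff_posSemidef.mpr hB)).symm

lemma myPosSemidef_smul {A : Matrix n n ℂ} (hA : A.PosSemidef) {r : ℝ} (hr : 0 ≤ r) :
    ((r : ℂ) • A).PosSemidef := by
  constructor
  · simp [Matrix.IsHermitian, conjTranspose_smul, Complex.star_def, Complex.conj_ofReal, hA.1.eq]
  · intro x
    exact (hA.smul (Complex.zero_le_real.mpr hr)).2 x

lemma mytraceNorm_smul (M : Matrix n n ℂ) {r : ℝ} (hr : 0 ≤ r) :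
    traceNorm ((r:ℂ) • M) = r * traceNorm M := by
  unfold traceNorm
  have h := Matrix.posSemidef_conjTranspose_mul_self M
  have h2 := Matrix.posSemidef_conjTranspose_mul_self ((r:ℂ) • M)
  have hsq : ((r:ℂ) • oldPosSemidefSqrt h) ^ 2 = ((r:ℂ) • M)ᴴ * ((r:ℂ) • M) := by
    rw [smul_pow, h.sq_sqrt, conjTranspose_smul]
    simp only [Complex.star_def, Complex.conj_ofReal, smul_mul_assoc, Matrix.mul_smul, smul_smul,
      sq]
  have hx : ((r:ℂ) • oldPosSemidefSqrt h) = oldPosSemidefSqrt h2 :=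
    (myPosSemidef_smul h.posSemidef_sqrt hr).eq_sqrt_of_sq_eq h2 hsq
  rw [← hx, trace_smul, smul_eq_mul, Complex.re_ofReal_mul]

theorem stmt0 (ρ P : Matrix n n ℂ) (hρ : IsDensity ρ)
    (hP : P.IsHermitian) (hproj : P * P = P)
    (δ : ℝ) (hδeq : ((P * ρ).trace).re = δ) (hδ : δ < 1) :
    fidelity ρ ((((1 - P) * ρ * (1 - P)).trace)⁻¹ • ((1 - P) * ρ * (1 - P))) ≥ 1 - δ := by
  obtain ⟨hρPSD, hρtr⟩ := hρ
  set Q : Matrix n n ℂ := 1 - P with hQdef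
  have hQH : Qᴴ = Q := by simp [hQdef, conjTranspose_sub, hP.eq]
  have hQQ : Q * Q = Q := by
    rw [hQdef, sub_mul, mul_sub, mul_sub, one_mul, mul_one, hproj]
    simp
  have hρ'' : (Q * ρ * Q).PosSemidef := by
    have := hρPSD.conjTranspose_mul_mul_same Q
    rwa [hQH] at this
  -- trace of P * ρ is real
  have htrPρ : (P * ρ).trace = (δ : ℂ) := by
    have hre : (P * ρ).trace = star ((P * ρ).trace) := by
      rw [← trace_conjTranspose, conjTranspose_mul, hP.eq, hρPSD.1.eq, trace_mul_comm]
    have him : ((P * ρ).trace).im = 0 := by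
      have h2 : ((P * ρ).trace).im = - ((P * ρ).trace).im := by
        conv_lhs => rw [hre]
        simp
      linarith
    apply Complex.ext
    · simpa using hδeq
    · simpa using him
  have htr'' : (Q * ρ * Q).trace = ((1 - δ : ℝ) : ℂ) := by
    rw [trace_mul_comm, ← mul_assoc, hQQ, hQdef, sub_mul, one_mul, trace_sub, hρtr, htrPρ]
    push_cast; ring
  set c : ℝ := 1 - δ with hcdef
  have hc : 0 < c := by simp [hcdef]; linarith
  -- square root of Q ρ Q
  set S : Matrix n n ℂ := oldPosSemidefSqrt hρ'' with hSdef
  have hSH : Sᴴ = S := hρ''.posSemidef_sqrt.1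
  have hSS : S * S = Q * ρ * Q := hρ''.sqrt_mul_self
  have hSQ : S * Q = S := by
    have hz : S * (1 - Q) = 0 := by
      rw [← Matrix.conjTranspose_mul_self_eq_zero (A := S * (1 - Q))]
      have : (S * (1 - Q))ᴴ * (S * (1 - Q)) = (1 - Q) * (S * S) * (1 - Q) := by
        rw [conjTranspose_mul, conjTranspose_sub, conjTranspose_one, hQH, hSH]
        simp only [mul_assoc]
      rw [this, hSS]
      have : (1 - Q) * (Q * ρ * Q) = 0 := by
        rw [sub_mul, one_mul, ← mul_assoc, ← mul_assoc, hQQ, sub_self]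
      rw [this, zero_mul]
    rw [mul_sub, mul_one] at hz
    exact (sub_eq_zero.mp hz).symm
  have hQS : Q * S = S := by
    have := congrArg conjTranspose hSQ
    rwa [conjTranspose_mul, hQH, hSH] at this
  -- key identity S ρ S = (QρQ)^2
  have hkey : S * ρ * S = (Q * ρ * Q) ^ 2 := by
    have h1 : (S * Q) * ρ * (Q * S) = S * ρ * S := by rw [hSQ, hQS]
    have h2 : (S * Q) * ρ * (Q * S) = S * ((Q * ρ * Q) * S) := by
      simp only [mul_assoc]
    rw [← h1, h2, ← hSS]
    simp only [sq, mul_assoc]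
  -- trace norm of √ρ * S
  have hTN : traceNorm (oldPosSemidefSqrt hρPSD * S) = c := by
    unfold traceNorm
    have h2 := Matrix.posSemidef_conjTranspose_mul_self (oldPosSemidefSqrt hρPSD * S)
    have e1 : (oldPosSemidefSqrt hρPSD * S)ᴴ * (oldPosSemidefSqrt hρPSD * S) = S * (oldPosSemidefSqrt hρPSD * oldPosSemidefSqrt hρPSD) * S := by
      rw [conjTranspose_mul, hSH, hρPSD.posSemidef_sqrt.1.eq]
      simp only [mul_assoc]
    have hsq : (Q * ρ * Q) ^ 2 = (oldPosSemidefSqrt hρPSD * S)ᴴ * (oldPosSemidefSqrt hρPSD * S) := by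
      rw [e1, hρPSD.sqrt_mul_self, hkey]
    have hx : Q * ρ * Q = oldPosSemidefSqrt h2 := hρ''.eq_sqrt_of_sq_eq h2 hsq
    rw [← hx, htr'']
    simp
  -- the scaled state and its square root
  have hσeq : ((Q * ρ * Q).trace)⁻¹ • (Q * ρ * Q) = ((c⁻¹ : ℝ) : ℂ) • (Q * ρ * Q) := by
    rw [htr'', Complex.ofReal_inv]
  have hcinv : (0:ℝ) ≤ c⁻¹ := (inv_nonneg).mpr hc.le
  have hσPSD : (((c⁻¹ : ℝ) : ℂ) • (Q * ρ * Q)).PosSemidef := myPosSemidef_smul hρ'' hcinv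
  have hmsσ : msqrt (((c⁻¹ : ℝ) : ℂ) • (Q * ρ * Q)) = ((Real.sqrt c⁻¹ : ℝ) : ℂ) • S := by
    unfold msqrt
    rw [dif_pos hσPSD]
    refine ((myPosSemidef_smul hρ''.posSemidef_sqrt (Real.sqrt_nonneg _)).eq_sqrt_of_sq_eq
      hσPSD ?_).symm
    rw [smul_pow, hρ''.sq_sqrt]
    congr 1
    rw [← Complex.ofReal_pow, Real.sq_sqrt hcinv]
  -- finish
  rw [hσeq]
  unfold fidelity
  have hmρ : msqrt ρ = oldPosSemidefSqrt hρPSD := by unfold msqrt; rw [dif_pos hρPSD]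
  rw [hmρ, hmsσ, mul_smul_comm, mytraceNorm_smul _ (Real.sqrt_nonneg _), hTN]
  have : (Real.sqrt c⁻¹ * c) ^ 2 = c := by
    rw [mul_pow, Real.sq_sqrt hcinv, sq]
    field_simp
  rw [this]
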